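/- In the constrained star network where each external vertex v_i is connected to the center u with capacity c_i and the center's score is fixed at M = ⌊(Σ_i c_i)/2⌋, the steady-state failure probability of a one-unit payment between any two external vertices v_i and v_j is at least 2/(c_i + c_j + 2). -/

import Mathlib

/-!
Pair each configuration `x` with the one obtained by pouring as much as possible of the
combined load `x i + x j` from `v_i` onto `v_j`, up to its capacity `c j`. The result still
satisfies all constraints and is a failing configuration: either `v_i` ends up empty or `v_j`
ends up full. Two configurations with the same image differ only in how `x i + x j` is split,
so they are determined by `x i ≤ c i`, and equally by `x j ≤ c j`; hence each failing
configuration is hit at most `min (c i) (c j) + 1 ≤ (c i + c j + 2) / 2` times.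
-/

open Finset

section Pour

variable {ι : Type*} [DecidableEq ι]

/-- Move units from coordinate `i` to coordinate `j` until `j` holds `b` or `i` is empty. -/
def pour (i j : ι) (b : ℕ) (x : ι → ℕ) : ι → ℕ :=
  Function.update (Function.update x j (min (x i + x j) b)) i (x i + x j - min (x i + x j) b)

variable {i j k : ι} {b : ℕ} {x y : ι → ℕ}

lemma pour_apply_of_ne (hki : k ≠ i) (hkj : k ≠ j) : pour i j b x k = x k := by
  simp [pour, Function.update_of_ne hki, Function.update_of_ne hkj]

lemma pour_apply_left : pour i j b x i = x i + x j - min (x i + x j) b := by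
  simp [pour]

lemma pour_apply_right (hij : i ≠ j) : pour i j b x j = min (x i + x j) b := by
  simp [pour, Function.update_of_ne hij.symm]

lemma pour_apply_left_add_right (hij : i ≠ j) :
    pour i j b x i + pour i j b x j = x i + x j := by
  rw [pour_apply_left, pour_apply_right hij]
  omega

lemma pour_apply_left_eq_zero_or_right_eq (hij : i ≠ j) :
    pour i j b x i = 0 ∨ pour i j b x j = b := by
  rw [pour_apply_left, pour_apply_right hij]
  omega

lemma pour_le {c : ι → ℕ} (hij : i ≠ j) (hx : ∀ k, x k ≤ c k) (k : ι) :
    pour i j (c j) x k ≤ c k := by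
  have := hx i
  have := hx j
  by_cases hki : k = i
  · subst hki
    rw [pour_apply_left]
    omega
  by_cases hkj : k = j
  · subst hkj
    rw [pour_apply_right hij]
    omega
  rw [pour_apply_of_ne hki hkj]
  exact hx k

lemma sum_eq_sum_of_eq_off_pair {M : Type*} [AddCommMonoid M] [Fintype ι] {x y : ι → M}
    (hij : i ≠ j) (hoff : ∀ k, k ≠ i → k ≠ j → x k = y k) (hpair : x i + x j = y i + y j) :
    ∑ k, x k = ∑ k, y k := by
  rw [← sum_add_sum_compl {i, j} x, ← sum_add_sum_compl {i, j} y, sum_pair hij, sum_pair hij,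
    hpair]
  congr 1
  refine sum_congr rfl fun k hk => ?_
  simp only [mem_compl, mem_insert, mem_singleton, not_or] at hk
  exact hoff k hk.1 hk.2

lemma sum_pour [Fintype ι] (hij : i ≠ j) : ∑ k, pour i j b x k = ∑ k, x k :=
  sum_eq_sum_of_eq_off_pair hij (fun _ hki hkj => pour_apply_of_ne hki hkj)
    (pour_apply_left_add_right hij)

lemma eq_of_pour_eq (hij : i ≠ j) (h : pour i j b x = pour i j b y)
    (hk : x i = y i ∨ x j = y j) : x = y := by
  have hpair : x i + x j = y i + y j := by
    rw [← pour_apply_left_add_right hij, ← pour_apply_left_add_right (x := y) hij, h]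
  funext k
  by_cases hki : k = i
  · subst hki
    omega
  by_cases hkj : k = j
  · subst hkj
    omega
  rw [← pour_apply_of_ne (b := b) (x := x) hki hkj, h, pour_apply_of_ne hki hkj]

lemma card_filter_pour_eq_le [Fintype ι] {s : Finset (ι → ℕ)} {m : ℕ} (a : ι → ℕ) (hij : i ≠ j)
    (hk : k = i ∨ k = j) (hs : ∀ x ∈ s, x k ≤ m) :
    #{x ∈ s | pour i j b x = a} ≤ m + 1 := by
  rw [← card_range (m + 1)]
  refine card_le_card_of_injOn (· k) (fun x hx => ?_) (fun x hx y hy hxy => ?_)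
  · exact mem_range.2 (Nat.lt_succ_of_le (hs x (mem_filter.1 hx).1))
  · have hx := (mem_filter.1 hx).2
    have hy := (mem_filter.1 hy).2
    refine eq_of_pour_eq hij (hx.trans hy.symm) ?_
    rcases hk with rfl | rfl
    exacts [Or.inl hxy, Or.inr hxy]

end Pour

section BoundedCompositions

variable {ι : Type*} [DecidableEq ι]

lemma exists_le_sum_eq (s : Finset ι) (c : ι → ℕ) {m : ℕ} (hm : m ≤ ∑ k ∈ s, c k) :
    ∃ x : ι → ℕ, (∀ k, x k ≤ c k) ∧ ∑ k ∈ s, x k = m := by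
  induction s using Finset.induction_on generalizing m with
  | empty => exact ⟨0, fun _ => Nat.zero_le _, by simp_all⟩
  | insert a s ha ih =>
    rw [sum_insert ha] at hm
    obtain ⟨x, hxc, hxs⟩ := ih (m := m - min m (c a)) (by omega)
    refine ⟨Function.update x a (min m (c a)), fun k => ?_, ?_⟩
    · rcases eq_or_ne k a with rfl | hka
      · simp
      · simpa [Function.update_of_ne hka] using hxc k
    · rw [sum_insert ha, Function.update_self, sum_update_of_notMem ha, hxs]
      omega

variable [Fintype ι]

def boundedCompositions (c : ι → ℕ) (M : ℕ) : Finset (ι → ℕ) :=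
  {x ∈ Fintype.piFinset fun k => range (c k + 1) | ∑ k, x k = M}

variable {c : ι → ℕ} {M : ℕ}

lemma mem_boundedCompositions {x : ι → ℕ} :
    x ∈ boundedCompositions c M ↔ (∀ k, x k ≤ c k) ∧ ∑ k, x k = M := by
  simp only [boundedCompositions, mem_filter, Fintype.mem_piFinset, mem_range, Nat.lt_succ_iff]

lemma boundedCompositions_nonempty (hM : M ≤ ∑ k, c k) : (boundedCompositions c M).Nonempty :=
  let ⟨x, hx⟩ := exists_le_sum_eq univ c hM
  ⟨x, mem_boundedCompositions.2 hx⟩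

theorem card_boundedCompositions_le_mul_card_filter (c : ι → ℕ) (M : ℕ) {i j : ι}
    (hij : i ≠ j) :
    #(boundedCompositions c M) ≤
      (min (c i) (c j) + 1) * #{x ∈ boundedCompositions c M | x i = 0 ∨ x j = c j} := by
  refine card_le_mul_card_image_of_maps_to (f := pour i j (c j)) (fun x hx => ?_) _
    (fun a _ => ?_)
  · obtain ⟨hxc, hxM⟩ := mem_boundedCompositions.1 hx
    exact mem_filter.2 ⟨mem_boundedCompositions.2 ⟨pour_le hij hxc, (sum_pour hij).trans hxM⟩,
      pour_apply_left_eq_zero_or_right_eq hij⟩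
  · have bound (k : ι) (hk : k = i ∨ k = j) :=
      card_filter_pour_eq_le (b := c j) a hij hk fun x (hx : x ∈ boundedCompositions c M) =>
        (mem_boundedCompositions.1 hx).1 k
    have := bound i (Or.inl rfl)
    have := bound j (Or.inr rfl)
    omega

end BoundedCompositions

theorem constrained_star_failure_lower_bound_general {n : ℕ} (c : Fin n → ℕ)
    (i j : Fin n) (hij : i ≠ j)
    (total fail : Finset (Fin n → ℕ))
    (htotal : total = (Fintype.piFinset fun k => Finset.range (c k + 1)).filter
      (fun x => ∑ k, x k = (∑ k, c k) / 2))
    (hfail : fail = total.filter (fun x => x i = 0 ∨ x j = c j)) :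
    2 / ((c i : ℚ) + (c j : ℚ) + 2) ≤ (fail.card : ℚ) / (total.card : ℚ) := by
  change total = boundedCompositions c ((∑ k, c k) / 2) at htotal
  subst htotal hfail
  set M := (∑ k, c k) / 2
  have hpos : 0 < #(boundedCompositions c M) :=
    (boundedCompositions_nonempty (Nat.div_le_self _ 2)).card_pos
  have hcount : 2 * #(boundedCompositions c M) ≤
      #{x ∈ boundedCompositions c M | x i = 0 ∨ x j = c j} * (c i + c j + 2) :=
    calc _ ≤ 2 * ((min (c i) (c j) + 1) * _) :=
          Nat.mul_le_mul_left 2 (card_boundedCompositions_le_mul_card_filter c M hij)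
      _ ≤ _ := by
          rw [mul_comm _ (c i + c j + 2), ← mul_assoc]
          gcongr
          omega
  rw [div_le_div_iff₀ (by positivity) (by exact_mod_cast hpos)]
  exact_mod_cast hcount

/-- In the constrained star where external vertex `v_k` has edge capacity `c k`
and the center's score is fixed at `M = ⌊(Σ c k)/2⌋`, the configurations are
the tuples `x` with `0 ≤ x k ≤ c k` and `Σ x k = M`, all equally likely; a
one-unit payment from `v_i` to `v_j` fails iff `x i = 0` or `x j = c j`.
The failure probability is at least `2/(c i + c j + 2)`. -/
theorem constrained_star_failure_lower_bound {n : ℕ} (c : Fin n → ℕ)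
    (hc : ∀ k, 0 < c k) (i j : Fin n) (hij : i ≠ j)
    (total fail : Finset (Fin n → ℕ))
    (htotal : total = (Fintype.piFinset fun k => Finset.range (c k + 1)).filter
      (fun x => ∑ k, x k = (∑ k, c k) / 2))
    (hfail : fail = total.filter (fun x => x i = 0 ∨ x j = c j)) :
    2 / ((c i : ℚ) + (c j : ℚ) + 2) ≤ (fail.card : ℚ) / (total.card : ℚ) :=
  constrained_star_failure_lower_bound_general c i j hij total fail htotal hfail
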